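/- arXiv:2107.14198 — 2 statements merged into one kernel-verified Lean document; each statement's English description precedes it below -/
import Mathlib

section
/- Let L be a residuated lattice and ι ∈ L a cyclic element. The map ψ(a) = (a, a\ι) is an isomorphism from L onto the conucleus image Tw(L,ι)_{τ_Tw} of the involutive residuated lattice Tw(L,ι) under the Nelson conucleus τ_Tw(a,b) = (a, a\ι) (i.e. ψ is a bijection onto {(a, a\ι) : a ∈ L} preserving ∨, ·, the identity, and the τ_Tw-relativized operations ∧_{τ_Tw}, \_{τ_Tw}, /_{τ_Tw}), and moreover ψ(ι) = τ_Tw(∼(e,ι)). -/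
/-- A residuated lattice: a lattice with a monoid operation and residuals
`ldiv x z` (i.e. `x \ z`) and `rdiv z y` (i.e. `z / y`) satisfying the
residuation law `x * y ≤ z ↔ y ≤ x \ z ↔ x ≤ z / y`. -/
class ResiduatedLattice (α : Type*) extends Lattice α, Monoid α where
  ldiv : α → α → α
  rdiv : α → α → α
  ldiv_adj : ∀ {x y z : α}, x * y ≤ z ↔ y ≤ ldiv x z
  rdiv_adj : ∀ {x y z : α}, x * y ≤ z ↔ x ≤ rdiv z y

open ResiduatedLattice

variable {α : Type*} [ResiduatedLattice α]

/-- Involution on the full twist structure: `∼(a,b) = (b,a)`. -/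
def tneg (p : α × α) : α × α := (p.2, p.1)

/-- Join of the twist structure `L × L^∂`. -/
def tjoin (p q : α × α) : α × α := (p.1 ⊔ q.1, p.2 ⊓ q.2)

/-- Meet of the twist structure `L × L^∂`. -/
def tmeet (p q : α × α) : α × α := (p.1 ⊓ q.1, p.2 ⊔ q.2)

/-- Order of the twist structure `L × L^∂`. -/
def tle (p q : α × α) : Prop := p.1 ≤ q.1 ∧ q.2 ≤ p.2

/-- Multiplication of the twist structure:
`(a,b)·(a′,b′) = (a·a′, b′/a ∧ a′\b)`. -/
def tmul (p q : α × α) : α × α := (p.1 * q.1, rdiv q.2 p.1 ⊓ ldiv q.1 p.2)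

/-- Left division of the twist structure:
`(a,b)\(a′,b′) = (a\a′ ∧ b/b′, b′·a)`. -/
def tld (p q : α × α) : α × α := (ldiv p.1 q.1 ⊓ rdiv p.2 q.2, q.2 * p.1)

/-- Right division of the twist structure:
`(a′,b′)/(a,b) = (a′/a ∧ b′\b, a·b′)`. -/
def trd (q p : α × α) : α × α := (rdiv q.1 p.1 ⊓ ldiv q.2 p.2, p.1 * q.2)

/-- The natural conucleus on the twist structure (for cyclic `ι`):
`τ_Tw(a,b) = (a, a\ι)`. -/
def ttw (ι : α) (p : α × α) : α × α := (p.1, ldiv p.1 ι)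

lemma mul_ldiv_le' (x z : α) : x * ldiv x z ≤ z := ldiv_adj.mpr le_rfl
lemma rdiv_mul_le' (x y : α) : rdiv x y * y ≤ x := rdiv_adj.mpr le_rfl
lemma mmul_left {y y' : α} (x : α) (h : y ≤ y') : x * y ≤ x * y' :=
  ldiv_adj.mpr (h.trans (ldiv_adj.mp le_rfl))
lemma mmul_right {x x' : α} (y : α) (h : x ≤ x') : x * y ≤ x' * y :=
  rdiv_adj.mpr (h.trans (rdiv_adj.mp le_rfl))

/-- for a residuated lattice `L` and a cyclic element `ι ∈ L`,
the map `ψ(a) = (a, a\ι)` is an isomorphism from `L` onto the conucleus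
image of `Tw(L,ι)` under the Nelson conucleus `τ_Tw(a,b) = (a, a\ι)`: it is
injective, its range is exactly the `τ_Tw`-image of `Tw(L,ι)`, it preserves
`∨`, `·`, the identities, and the `τ_Tw`-relativized operations
`∧_{τ_Tw}`, `\_{τ_Tw}`, `/_{τ_Tw}`; moreover `ψ(ι) = τ_Tw(∼(e,ι))`. -/
theorem psi_isomorphism_onto_conucleus_image (ι : α)
    (hcyc : ∀ x : α, ldiv x ι = rdiv ι x) :
    letI S : Set (α × α) := {p | p.1 * p.2 ≤ ι}
    letI ψ : α → α × α := fun a => (a, ldiv a ι)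
    Function.Injective ψ ∧
    Set.range ψ = ttw ι '' S ∧
    (∀ a b : α, ψ (a ⊔ b) = tjoin (ψ a) (ψ b)) ∧
    (∀ a b : α, ψ (a * b) = tmul (ψ a) (ψ b)) ∧
    (∀ a b : α, ψ (a ⊓ b) = ttw ι (tmeet (ψ a) (ψ b))) ∧
    (∀ a b : α, ψ (ldiv a b) = ttw ι (tld (ψ a) (ψ b))) ∧
    (∀ a b : α, ψ (rdiv b a) = ttw ι (trd (ψ b) (ψ a))) ∧
    (ψ 1 = ttw ι ((1 : α), ι)) ∧
    (ψ ι = ttw ι (tneg ((1 : α), ι))) := by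
  show _ ∧ _
  refine ⟨?_, ?_, ?_, ?_, ?_, ?_, ?_, rfl, rfl⟩
  · intro a b h
    exact congrArg Prod.fst h
  · ext p
    constructor
    · rintro ⟨a, rfl⟩
      exact ⟨(a, ldiv a ι), mul_ldiv_le' a ι, rfl⟩
    · rintro ⟨q, _, rfl⟩
      exact ⟨q.1, rfl⟩
  · intro a b
    refine Prod.ext rfl ?_
    show ldiv (a ⊔ b) ι = ldiv a ι ⊓ ldiv b ι
    apply le_antisymm
    · refine le_inf ?_ ?_
      · exact ldiv_adj.mp ((mmul_right _ le_sup_left).trans (mul_ldiv_le' _ _))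
      · exact ldiv_adj.mp ((mmul_right _ le_sup_right).trans (mul_ldiv_le' _ _))
    · refine ldiv_adj.mp (rdiv_adj.mpr (sup_le ?_ ?_))
      · exact rdiv_adj.mp ((mmul_left a inf_le_left).trans (mul_ldiv_le' _ _))
      · exact rdiv_adj.mp ((mmul_left b inf_le_right).trans (mul_ldiv_le' _ _))
  · intro a b
    refine Prod.ext rfl ?_
    show ldiv (a * b) ι = rdiv (ldiv b ι) a ⊓ ldiv b (ldiv a ι)
    apply le_antisymm
    · refine le_inf ?_ ?_
      · rw [hcyc b, hcyc (a * b)]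
        refine rdiv_adj.mp (rdiv_adj.mp ?_)
        calc rdiv ι (a * b) * a * b = rdiv ι (a * b) * (a * b) := by rw [mul_assoc]
          _ ≤ ι := rdiv_mul_le' _ _
      · refine ldiv_adj.mp (ldiv_adj.mp ?_)
        calc a * (b * ldiv (a * b) ι) = a * b * ldiv (a * b) ι := by rw [mul_assoc]
          _ ≤ ι := mul_ldiv_le' _ _
    · refine ldiv_adj.mp ?_
      calc a * b * (rdiv (ldiv b ι) a ⊓ ldiv b (ldiv a ι))
          ≤ a * b * ldiv b (ldiv a ι) := mmul_left _ inf_le_right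
        _ = a * (b * ldiv b (ldiv a ι)) := by rw [mul_assoc]
        _ ≤ a * ldiv a ι := mmul_left a (mul_ldiv_le' _ _)
        _ ≤ ι := mul_ldiv_le' _ _
  · intro a b
    exact Prod.ext rfl rfl
  · intro a b
    refine Prod.ext ?_ ?_
    · show ldiv a b = ldiv a b ⊓ rdiv (ldiv a ι) (ldiv b ι)
      refine (inf_eq_left.mpr ?_).symm
      refine rdiv_adj.mp (ldiv_adj.mp ?_)
      calc a * (ldiv a b * ldiv b ι) = a * ldiv a b * ldiv b ι := by rw [mul_assoc]
        _ ≤ b * ldiv b ι := mmul_right _ (mul_ldiv_le' _ _)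
        _ ≤ ι := mul_ldiv_le' _ _
    · show ldiv (ldiv a b) ι = ldiv (ldiv a b ⊓ rdiv (ldiv a ι) (ldiv b ι)) ι
      congr 1
      refine (inf_eq_left.mpr ?_).symm
      refine rdiv_adj.mp (ldiv_adj.mp ?_)
      calc a * (ldiv a b * ldiv b ι) = a * ldiv a b * ldiv b ι := by rw [mul_assoc]
        _ ≤ b * ldiv b ι := mmul_right _ (mul_ldiv_le' _ _)
        _ ≤ ι := mul_ldiv_le' _ _
  · intro a b
    have key : rdiv b a ≤ ldiv (ldiv b ι) (ldiv a ι) := by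
      rw [hcyc a, hcyc b]
      refine ldiv_adj.mp (rdiv_adj.mp ?_)
      calc rdiv ι b * rdiv b a * a = rdiv ι b * (rdiv b a * a) := by rw [mul_assoc]
        _ ≤ rdiv ι b * b := mmul_left _ (rdiv_mul_le' _ _)
        _ ≤ ι := rdiv_mul_le' _ _
    refine Prod.ext ?_ ?_
    · exact (inf_eq_left.mpr key).symm
    · show ldiv (rdiv b a) ι = ldiv (rdiv b a ⊓ ldiv (ldiv b ι) (ldiv a ι)) ι
      congr 1
      exact (inf_eq_left.mpr key).symm
end

section
/- Let A be an involutive residuated lattice, τ a Nelson conucleus on A, and ι = τ(∼e). Then the map φ : A → Tw(A_τ, ι) given by φ(x) = (τ(x), τ(∼x)) is well-defined (i.e. τ(x)·τ(∼x) ≤ ι in A_τ) and is an injective homomorphism of involutive residuated lattices from A to Tw(A_τ, ι) sending e to (e, ι); moreover φ(τ(x)) = τ_Tw(φ(x)) for all x, so that A is isomorphic to a subalgebra of Tw(A_τ, ι) containing the image of τ_Tw. -/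
open ResiduatedLattice

variable {α : Type*} [ResiduatedLattice α]

/-- A (cyclic) involutive residuated lattice: a residuated lattice with an
involution `∼` satisfying `∼∼x = x` and the contraposition law
`x\∼y = ∼x/y`. -/
class InvResiduatedLattice (β : Type*) extends ResiduatedLattice β where
  neg : β → β
  neg_neg : ∀ x : β, neg (neg x) = x
  contra : ∀ x y : β, ldiv x (neg y) = rdiv (neg x) y

open InvResiduatedLattice

/-- A conucleus on a residuated lattice (conditions (C1)-(C5)). -/
def IsConucleus {β : Type*} [Lattice β] [Monoid β] (τ : β → β) : Prop :=
  (∀ x, τ x ≤ x) ∧ (∀ x, τ (τ x) = τ x) ∧ (∀ x y, x ≤ y → τ x ≤ τ y) ∧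
  (∀ x y, τ x * τ y ≤ τ (x * y)) ∧
  (∀ x, τ 1 * τ x = τ x) ∧ (∀ x, τ x * τ 1 = τ x)

/-- A Nelson conucleus: a conucleus additionally satisfying
(T1) `τ(x∨y) = τx ∨ τy`, (T2) `τ(x·y) = τx·τy`, and
(T3) `x·y ≤ τx·y ∨ x·τy`. -/
def IsNelsonConucleus {β : Type*} [Lattice β] [Monoid β] (τ : β → β) : Prop :=
  IsConucleus τ ∧
  (∀ x y, τ (x ⊔ y) = τ x ⊔ τ y) ∧
  (∀ x y, τ (x * y) = τ x * τ y) ∧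
  (∀ x y, x * y ≤ τ x * y ⊔ x * τ y)

section
variable (τ : α → α)

/-- Join of the twist structure over the conucleus image `A_τ`
(where the meet of `A_τ` is `a ∧_τ b = τ(a ⊓ b)`). -/
def tjoinI (p q : α × α) : α × α := (p.1 ⊔ q.1, τ (p.2 ⊓ q.2))

/-- Meet of the twist structure over the conucleus image `A_τ`. -/
def tmeetI (p q : α × α) : α × α := (τ (p.1 ⊓ q.1), p.2 ⊔ q.2)

/-- Multiplication of the twist structure over `A_τ`:
`(a,b)·(a′,b′) = (a·a′, (b′ /_τ a) ∧_τ (a′ \_τ b))`. -/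
def tmulI (p q : α × α) : α × α :=
  (p.1 * q.1, τ (τ (rdiv q.2 p.1) ⊓ τ (ldiv q.1 p.2)))

/-- Left division of the twist structure over `A_τ`. -/
def tldI (p q : α × α) : α × α :=
  (τ (τ (ldiv p.1 q.1) ⊓ τ (rdiv p.2 q.2)), q.2 * p.1)

/-- Right division of the twist structure over `A_τ`. -/
def trdI (q p : α × α) : α × α :=
  (τ (τ (rdiv q.1 p.1) ⊓ τ (ldiv q.2 p.2)), p.1 * q.2)

/-- The Nelson conucleus `τ_Tw` of the twist structure over `A_τ` with
cyclic element `ι`: `τ_Tw(a,b) = (a, a \_τ ι)`. -/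
def ttwI (ι : α) (p : α × α) : α × α := (p.1, τ (ldiv p.1 ι))

end

/-! ### Auxiliary lemmas -/

lemma twist_ext {γ δ : Type*} {p q : γ × δ} (h1 : p.1 = q.1) (h2 : p.2 = q.2) : p = q := by
  cases p; cases q; simp_all

section AuxRL
variable {β : Type*} [ResiduatedLattice β]

lemma rl_mul_ldiv_le (x z : β) : x * ldiv x z ≤ z := ldiv_adj.mpr le_rfl

lemma rl_rdiv_mul_le (z y : β) : rdiv z y * y ≤ z := rdiv_adj.mpr le_rfl

lemma rl_mul_le_mul_r {x y : β} (z : β) (h : x ≤ y) : x * z ≤ y * z :=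
  rdiv_adj.mpr (h.trans (rdiv_adj.mp le_rfl))

lemma rl_mul_le_mul_l {x y : β} (z : β) (h : x ≤ y) : z * x ≤ z * y :=
  ldiv_adj.mpr (h.trans (ldiv_adj.mp le_rfl))

end AuxRL

section AuxInv
open InvResiduatedLattice
variable {β : Type*} [InvResiduatedLattice β]

lemma irl_rdiv_one (z : β) : rdiv z 1 = z :=
  le_antisymm (by have := rl_rdiv_mul_le z (1 : β); simpa using this)
    (rdiv_adj.mp (by simp))

lemma irl_ldiv_one (z : β) : ldiv 1 z = z :=
  le_antisymm (by have := rl_mul_ldiv_le (1 : β) z; simpa using this)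
    (ldiv_adj.mp (by simp))

lemma irl_neg_eq_ldiv (x : β) : neg x = ldiv x (neg 1) := by
  rw [contra, irl_rdiv_one]

lemma irl_neg_eq_rdiv (y : β) : neg y = rdiv (neg 1) y := by
  rw [← contra, irl_ldiv_one]

lemma irl_kr {x y : β} : x * y ≤ neg 1 ↔ y ≤ neg x := by
  rw [irl_neg_eq_ldiv x]; exact ldiv_adj

lemma irl_kl {x y : β} : x * y ≤ neg 1 ↔ x ≤ neg y := by
  rw [irl_neg_eq_rdiv y]; exact rdiv_adj

lemma irl_comm {x y : β} : x ≤ neg y ↔ y ≤ neg x := by rw [← irl_kl, irl_kr]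

lemma irl_swap {u v : β} : u * v ≤ neg 1 ↔ v * u ≤ neg 1 := by
  rw [irl_kr]; exact irl_kl.symm

lemma irl_mul_neg_self (x : β) : x * neg x ≤ neg 1 := irl_kr.mpr le_rfl

lemma irl_neg_self_mul (x : β) : neg x * x ≤ neg 1 := irl_kl.mpr le_rfl

lemma irl_neg_le_neg {x y : β} (h : x ≤ y) : neg y ≤ neg x :=
  irl_kr.mp ((rl_mul_le_mul_r (neg y) h).trans (irl_mul_neg_self y))

lemma irl_neg_mul (x y : β) : neg (x * y) = ldiv y (neg x) := by
  apply le_antisymm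
  · exact ldiv_adj.mp (irl_kr.mp (by rw [← mul_assoc]; exact irl_mul_neg_self _))
  · exact irl_kr.mp (by
      rw [mul_assoc]
      exact (rl_mul_le_mul_l x (rl_mul_ldiv_le y (neg x))).trans (irl_mul_neg_self x))

lemma irl_neg_mul' (x y : β) : neg (x * y) = rdiv (neg y) x := by
  rw [irl_neg_mul, contra]

lemma irl_ldiv_eq (x y : β) : ldiv x y = neg (neg y * x) := by
  apply le_antisymm
  · exact irl_kr.mp (by
      rw [mul_assoc]
      exact (rl_mul_le_mul_l (neg y) (rl_mul_ldiv_le x y)).trans (irl_neg_self_mul y))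
  · refine ldiv_adj.mp ?_
    calc x * neg (neg y * x) ≤ neg (neg y) :=
          irl_kr.mp (by rw [← mul_assoc]; exact irl_mul_neg_self _)
      _ = y := InvResiduatedLattice.neg_neg y

lemma irl_rdiv_eq (y x : β) : rdiv y x = neg (x * neg y) := by
  have h := contra (neg y) x
  rw [InvResiduatedLattice.neg_neg] at h
  rw [← h, irl_ldiv_eq, InvResiduatedLattice.neg_neg]

lemma irl_neg_sup (x y : β) : neg (x ⊔ y) = neg x ⊓ neg y :=
  le_antisymm (le_inf (irl_neg_le_neg le_sup_left) (irl_neg_le_neg le_sup_right))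
    (irl_comm.mp (sup_le (irl_comm.mp inf_le_left) (irl_comm.mp inf_le_right)))

lemma irl_neg_inf (x y : β) : neg (x ⊓ y) = neg x ⊔ neg y := by
  have h := irl_neg_sup (neg x) (neg y)
  rw [InvResiduatedLattice.neg_neg, InvResiduatedLattice.neg_neg] at h
  rw [← h, InvResiduatedLattice.neg_neg]

end AuxInv

open InvResiduatedLattice in
/-- for an involutive residuated lattice `A` with Nelson
conucleus `τ` and `ι = τ(∼e)`, the map `φ(x) = (τx, τ(∼x))` is well defined
(i.e. `τx · τ(∼x) ≤ ι`), injective, a homomorphism of involutive residuated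
lattices into `Tw(A_τ, ι)` sending `e` to `(e,ι)`, and satisfies
`φ(τx) = τ_Tw(φx)`; hence `A` is isomorphic to a twist-product over
`(A_τ, ι)`, i.e. a subalgebra of `Tw(A_τ, ι)` containing the image of
`τ_Tw`. -/
theorem representation_by_twist_product {α : Type*} [InvResiduatedLattice α]
    (τ : α → α) (hτ : IsNelsonConucleus τ) :
    letI ι : α := τ (neg 1)
    letI φ : α → α × α := fun x => (τ x, τ (neg x))
    -- well-definedness: the image lies in `Tw(A_τ, ι)`
    (∀ x : α, τ x * τ (neg x) ≤ ι) ∧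
    -- injectivity
    Function.Injective φ ∧
    -- homomorphism into the twist structure over `A_τ`
    (∀ x y : α, φ (x ⊔ y) = tjoinI τ (φ x) (φ y)) ∧
    (∀ x y : α, φ (x ⊓ y) = tmeetI τ (φ x) (φ y)) ∧
    (∀ x y : α, φ (x * y) = tmulI τ (φ x) (φ y)) ∧
    (∀ x y : α, φ (ldiv x y) = tldI τ (φ x) (φ y)) ∧
    (∀ x y : α, φ (rdiv y x) = trdI τ (φ y) (φ x)) ∧
    (∀ x : α, φ (neg x) = tneg (φ x)) ∧
    (φ 1 = ((1 : α), ι)) ∧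
    -- compatibility with the conuclei
    (∀ x : α, φ (τ x) = ttwI τ ι (φ x)) ∧
    -- the image of `φ` contains the image of `τ_Tw` on `Tw(A_τ, ι)`
    (∀ p : α × α, p.1 ∈ Set.range τ → p.2 ∈ Set.range τ → p.1 * p.2 ≤ ι →
      ttwI τ ι p ∈ Set.range φ) := by
  obtain ⟨⟨hc1, hc2, hc3, hc4, hc5, hc6⟩, hT1, hT2, hT3⟩ := hτ
  have hτ1 : τ (1 : α) = 1 := by
    refine le_antisymm (hc1 1) ?_
    have h := hT3 (1 : α) 1
    simpa using h
  have hmeet : ∀ a b : α, τ (τ a ⊓ τ b) = τ (a ⊓ b) := by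
    intro a b
    refine le_antisymm (hc3 _ _ (inf_le_inf (hc1 a) (hc1 b))) ?_
    calc τ (a ⊓ b) = τ (τ (a ⊓ b)) := (hc2 _).symm
      _ ≤ τ (τ a ⊓ τ b) :=
        hc3 _ _ (le_inf (hc3 _ _ inf_le_left) (hc3 _ _ inf_le_right))
  have key1 : ∀ x : α, τ x * τ (neg x) ≤ τ (neg 1) := by
    intro x
    rw [← hT2]
    exact hc3 _ _ (irl_mul_neg_self x)
  have hle : ∀ x y : α, τ x ≤ τ y → τ (neg y) ≤ τ (neg x) → x ≤ y := by
    intro x y h1 h2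
    have h3 : x * neg y ≤ neg 1 := by
      refine (hT3 x (neg y)).trans (sup_le ?_ ?_)
      · exact (rl_mul_le_mul_r _ (h1.trans (hc1 y))).trans (irl_mul_neg_self y)
      · exact (rl_mul_le_mul_l _ (h2.trans (hc1 (neg x)))).trans (irl_mul_neg_self x)
    have h4 := irl_kl.mp h3
    rwa [InvResiduatedLattice.neg_neg] at h4
  have hkey : ∀ x : α, τ (neg (τ x)) = τ (ldiv (τ x) (τ (neg 1))) := by
    intro x
    apply le_antisymm
    · have h : τ x * τ (neg (τ x)) ≤ τ (neg 1) := by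
        calc τ x * τ (neg (τ x)) = τ (τ x * neg (τ x)) := by rw [hT2, hc2]
          _ ≤ τ (neg 1) := hc3 _ _ (irl_mul_neg_self (τ x))
      calc τ (neg (τ x)) = τ (τ (neg (τ x))) := (hc2 _).symm
        _ ≤ τ (ldiv (τ x) (τ (neg 1))) := hc3 _ _ (ldiv_adj.mp h)
    · refine hc3 _ _ ?_
      rw [irl_neg_eq_ldiv (τ x)]
      exact ldiv_adj.mp ((rl_mul_ldiv_le _ _).trans (hc1 _))
  refine ⟨key1, ?_, ?_, ?_, ?_, ?_, ?_, ?_, ?_, ?_, ?_⟩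
  · -- injectivity
    intro x y h
    have e1 : τ x = τ y := congrArg Prod.fst h
    have e2 : τ (neg x) = τ (neg y) := congrArg Prod.snd h
    exact le_antisymm (hle x y e1.le e2.ge) (hle y x e1.ge e2.le)
  · -- join
    intro x y
    refine twist_ext ?_ ?_
    · exact hT1 x y
    · show τ (neg (x ⊔ y)) = τ (τ (neg x) ⊓ τ (neg y))
      rw [irl_neg_sup, hmeet]
  · -- meet
    intro x y
    refine twist_ext ?_ ?_
    · show τ (x ⊓ y) = τ (τ x ⊓ τ y)
      exact (hmeet x y).symm
    · show τ (neg (x ⊓ y)) = τ (neg x) ⊔ τ (neg y)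
      rw [irl_neg_inf, hT1]
  · -- multiplication
    intro x y
    refine twist_ext ?_ ?_
    · exact hT2 x y
    · show τ (neg (x * y)) = τ (τ (rdiv (τ (neg y)) (τ x)) ⊓ τ (ldiv (τ y) (τ (neg x))))
      rw [hmeet, irl_neg_mul]
      apply le_antisymm
      · have hA : τ (ldiv y (neg x)) * τ x ≤ τ (neg y) := by
          rw [← hT2]
          refine hc3 _ _ ?_
          rw [contra]
          exact rl_rdiv_mul_le _ _
        have hB : τ y * τ (ldiv y (neg x)) ≤ τ (neg x) := by
          rw [← hT2]
          exact hc3 _ _ (rl_mul_ldiv_le y (neg x))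
        calc τ (ldiv y (neg x)) = τ (τ (ldiv y (neg x))) := (hc2 _).symm
          _ ≤ τ (rdiv (τ (neg y)) (τ x) ⊓ ldiv (τ y) (τ (neg x))) :=
            hc3 _ _ (le_inf (rdiv_adj.mp hA) (ldiv_adj.mp hB))
      · set z := rdiv (τ (neg y)) (τ x) ⊓ ldiv (τ y) (τ (neg x)) with hz
        have h1 : τ x * y * τ z ≤ neg 1 := by
          rw [irl_swap, ← mul_assoc]
          have hzx : τ z * τ x ≤ neg y :=
            ((rl_mul_le_mul_r (τ x) ((hc1 z).trans inf_le_left)).trans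
              (rl_rdiv_mul_le _ _)).trans (hc1 _)
          exact (rl_mul_le_mul_r y hzx).trans (irl_neg_self_mul y)
        have h2 : x * τ y * τ z ≤ neg 1 := by
          rw [mul_assoc]
          have hyz : τ y * τ z ≤ neg x :=
            ((rl_mul_le_mul_l (τ y) ((hc1 z).trans inf_le_right)).trans
              (rl_mul_ldiv_le _ _)).trans (hc1 _)
          exact (rl_mul_le_mul_l x hyz).trans (irl_mul_neg_self x)
        have h3 : x * y * τ z ≤ neg 1 := by
          refine rdiv_adj.mpr ?_
          exact (hT3 x y).trans (sup_le (rdiv_adj.mp h1) (rdiv_adj.mp h2))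
        have h4 : τ z ≤ ldiv y (neg x) := by
          refine ldiv_adj.mp (irl_kr.mp ?_)
          rw [← mul_assoc]
          exact h3
        calc τ z = τ (τ z) := (hc2 z).symm
          _ ≤ τ (ldiv y (neg x)) := hc3 _ _ h4
  · -- left division
    intro x y
    refine twist_ext ?_ ?_
    · show τ (ldiv x y) = τ (τ (ldiv (τ x) (τ y)) ⊓ τ (rdiv (τ (neg x)) (τ (neg y))))
      rw [hmeet]
      apply le_antisymm
      · have hA : τ x * τ (ldiv x y) ≤ τ y := by
          rw [← hT2]
          exact hc3 _ _ (rl_mul_ldiv_le x y)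
        have hB : τ (ldiv x y) * τ (neg y) ≤ τ (neg x) := by
          rw [← hT2]
          refine hc3 _ _ (irl_kr.mp ?_)
          rw [← mul_assoc]
          exact (rl_mul_le_mul_r (neg y) (rl_mul_ldiv_le x y)).trans (irl_mul_neg_self y)
        calc τ (ldiv x y) = τ (τ (ldiv x y)) := (hc2 _).symm
          _ ≤ τ (ldiv (τ x) (τ y) ⊓ rdiv (τ (neg x)) (τ (neg y))) :=
            hc3 _ _ (le_inf (ldiv_adj.mp hA) (rdiv_adj.mp hB))
      · set z := ldiv (τ x) (τ y) ⊓ rdiv (τ (neg x)) (τ (neg y)) with hz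
        have h1 : τ x * (τ z * neg y) ≤ neg 1 := by
          rw [← mul_assoc]
          have hxz : τ x * τ z ≤ y :=
            ((rl_mul_le_mul_l (τ x) ((hc1 z).trans inf_le_left)).trans
              (rl_mul_ldiv_le (τ x) (τ y))).trans (hc1 y)
          exact (rl_mul_le_mul_r (neg y) hxz).trans (irl_mul_neg_self y)
        have h2 : x * τ (τ z * neg y) ≤ neg 1 := by
          rw [hT2, hc2]
          have hzy : τ z * τ (neg y) ≤ neg x :=
            ((rl_mul_le_mul_r (τ (neg y)) ((hc1 z).trans inf_le_right)).trans
              (rl_rdiv_mul_le (τ (neg x)) (τ (neg y)))).trans (hc1 _)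
          exact (rl_mul_le_mul_l x hzy).trans (irl_mul_neg_self x)
        have h3 : x * (τ z * neg y) ≤ neg 1 :=
          (hT3 x (τ z * neg y)).trans (sup_le h1 h2)
        have h4 : x * τ z ≤ y := by
          have h5 : neg y * (x * τ z) ≤ neg 1 := by
            rw [irl_swap, mul_assoc]
            exact h3
          have h6 := irl_kr.mp h5
          rwa [InvResiduatedLattice.neg_neg] at h6
        calc τ z = τ (τ z) := (hc2 z).symm
          _ ≤ τ (ldiv x y) := hc3 _ _ (ldiv_adj.mp h4)
    · show τ (neg (ldiv x y)) = τ (neg y) * τ x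
      rw [irl_ldiv_eq, InvResiduatedLattice.neg_neg, hT2]
  · -- right division
    intro x y
    refine twist_ext ?_ ?_
    · show τ (rdiv y x) = τ (τ (rdiv (τ y) (τ x)) ⊓ τ (ldiv (τ (neg y)) (τ (neg x))))
      rw [hmeet]
      apply le_antisymm
      · have hA : τ (rdiv y x) * τ x ≤ τ y := by
          rw [← hT2]
          exact hc3 _ _ (rl_rdiv_mul_le y x)
        have hB : τ (neg y) * τ (rdiv y x) ≤ τ (neg x) := by
          rw [← hT2]
          refine hc3 _ _ (irl_kr.mp ?_)
          rw [irl_swap, mul_assoc]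
          exact (rl_mul_le_mul_l (neg y) (rl_rdiv_mul_le y x)).trans (irl_neg_self_mul y)
        calc τ (rdiv y x) = τ (τ (rdiv y x)) := (hc2 _).symm
          _ ≤ τ (rdiv (τ y) (τ x) ⊓ ldiv (τ (neg y)) (τ (neg x))) :=
            hc3 _ _ (le_inf (rdiv_adj.mp hA) (ldiv_adj.mp hB))
      · set z := rdiv (τ y) (τ x) ⊓ ldiv (τ (neg y)) (τ (neg x)) with hz
        have h1 : τ (neg y * τ z) * x ≤ neg 1 := by
          rw [hT2, hc2]
          have hyz : τ (neg y) * τ z ≤ neg x :=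
            ((rl_mul_le_mul_l (τ (neg y)) ((hc1 z).trans inf_le_right)).trans
              (rl_mul_ldiv_le _ _)).trans (hc1 _)
          exact (rl_mul_le_mul_r x hyz).trans (irl_neg_self_mul x)
        have h2 : (neg y * τ z) * τ x ≤ neg 1 := by
          rw [mul_assoc]
          have hzx : τ z * τ x ≤ y :=
            ((rl_mul_le_mul_r (τ x) ((hc1 z).trans inf_le_left)).trans
              (rl_rdiv_mul_le _ _)).trans (hc1 y)
          exact (rl_mul_le_mul_l (neg y) hzx).trans (irl_neg_self_mul y)
        have h3 : (neg y * τ z) * x ≤ neg 1 :=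
          (hT3 (neg y * τ z) x).trans (sup_le h1 h2)
        have h4 : τ z * x ≤ y := by
          have h5 : neg y * (τ z * x) ≤ neg 1 := by
            rw [← mul_assoc]
            exact h3
          have h6 := irl_kr.mp h5
          rwa [InvResiduatedLattice.neg_neg] at h6
        calc τ z = τ (τ z) := (hc2 z).symm
          _ ≤ τ (rdiv y x) := hc3 _ _ (rdiv_adj.mp h4)
    · show τ (neg (rdiv y x)) = τ x * τ (neg y)
      rw [irl_rdiv_eq, InvResiduatedLattice.neg_neg, hT2]
  · -- negation
    intro x
    refine twist_ext rfl ?_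
    show τ (neg (neg x)) = τ x
    rw [InvResiduatedLattice.neg_neg]
  · -- identity
    refine twist_ext ?_ rfl
    exact hτ1
  · -- conucleus compatibility
    intro x
    refine twist_ext (hc2 x) ?_
    show τ (neg (τ x)) = τ (ldiv (τ x) (τ (neg 1)))
    exact hkey x
  · -- containment of the image of the twist conucleus
    rintro p ⟨a, ha⟩ hb hab
    refine ⟨p.1, ?_⟩
    refine twist_ext ?_ ?_
    · show τ p.1 = p.1
      rw [← ha, hc2]
    · show τ (neg p.1) = τ (ldiv p.1 (τ (neg 1)))
      rw [← ha]
      exact hkey a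
end
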